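/- Let G = (X, W) be a monotone simple game on a finite set X with |X| = n. Then Q*₀(G) := (1/(n+1)) Σ_{k=0}^{n} |W_k| / C(n,k) = 1 − Q̄(G)/(n+1), where Q̄(G) is the average over all n! bijections σ : {1,…,n} → X of the quantity Q_σ(G), defined as the least k such that {σ(1),…,σ(k)} is a winning coalition (and n+1 if no such k exists). -/

import Mathlib

/-!
By monotonicity the initial segments of `σ` are losing exactly for `k < Q_σ`, so
`n + 1 - Q_σ` counts the `k ≤ n` whose initial `k`-segment wins. Summing over `σ` and
exchanging the sums turns `∑_σ (n + 1 - Q_σ)` into `∑_k #{σ | initial k-segment of σ wins}`.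
Permutations of `X` act transitively on `k`-sets, so every `k`-set is the initial segment of
the same number `n! / C(n,k)` of orderings, and `#{σ | …} = |W_k| · n! / C(n,k)`.
-/

/-- The set of the first `k` players queried, according to the ordering `σ`. -/
def initSeg {n : ℕ} {X : Type*} [DecidableEq X] (σ : Fin n ≃ X) (k : ℕ) : Finset X :=
  (Finset.univ.filter fun j : Fin n => (j : ℕ) < k).image σ

open Classical in
/-- The number of queries needed to find a winning coalition under the ordering `σ`:
the least `k` such that the first `k` players queried form a winning coalition, and
`n + 1` if no such `k` exists. -/
noncomputable def Qval {n : ℕ} {X : Type*} [DecidableEq X] (W : Finset (Finset X))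
    (σ : Fin n ≃ X) : ℕ :=
  if h : ∃ k, initSeg σ k ∈ W then Nat.find h else n + 1

open Finset
open scoped Nat

section InitialSegments

variable {n : ℕ} {X : Type*} [DecidableEq X]

lemma initSeg_mono (σ : Fin n ≃ X) : Monotone (initSeg σ) := fun _ _ hkl =>
  image_subset_image <| monotone_filter_right _ fun _ _ hj => lt_of_lt_of_le hj hkl

lemma card_initSeg (σ : Fin n ≃ X) {k : ℕ} (hk : k ≤ n) : #(initSeg σ k) = k := by
  rw [initSeg, card_image_of_injective _ σ.injective, Fin.card_filter_val_lt, min_eq_right hk]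

lemma initSeg_self [Fintype X] (σ : Fin n ≃ X) : initSeg σ n = univ := by
  simp [initSeg]

lemma initSeg_trans (σ : Fin n ≃ X) (g : X ≃ X) (k : ℕ) :
    initSeg (σ.trans g) k = (initSeg σ k).image g := by
  rw [initSeg, initSeg, image_image]
  rfl

end InitialSegments

lemma Qval_eq_card_filter_notMem {n : ℕ} {X : Type*} [Fintype X] [DecidableEq X]
    {W : Finset (Finset X)} (hmono : ∀ A B : Finset X, A ∈ W → A ⊆ B → B ∈ W) (σ : Fin n ≃ X) :
    Qval W σ = #{k ∈ range (n + 1) | initSeg σ k ∉ W} := by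
  unfold Qval
  split_ifs with h
  · have hwin : ∀ {k}, Nat.find h ≤ k → initSeg σ k ∈ W := fun hk =>
      hmono _ _ (Nat.find_spec h) (initSeg_mono σ hk)
    have hle : Nat.find h ≤ n := Nat.find_min' h <| by
      rw [initSeg_self]
      exact hmono _ _ h.choose_spec (subset_univ _)
    suffices {k ∈ range (n + 1) | initSeg σ k ∉ W} = range (Nat.find h) by rw [this, card_range]
    ext k
    simp only [mem_filter, mem_range]
    exact ⟨fun ⟨_, hk⟩ => lt_of_not_ge (mt hwin hk), fun hk => ⟨by omega, Nat.find_min h hk⟩⟩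
  · rw [filter_true_of_mem fun k _ => not_exists.1 h k, card_range]

lemma exists_perm_image_eq {α : Type*} [Fintype α] [DecidableEq α] {S T : Finset α}
    (h : #S = #T) : ∃ g : Equiv.Perm α, S.image g = T := by
  let e : S ≃ T := equivOfCardEq h
  refine ⟨e.extendSubtype, eq_of_subset_of_card_le ?_ ?_⟩
  · intro y hy
    obtain ⟨x, hx, rfl⟩ := mem_image.1 hy
    exact e.extendSubtype_mem x hx
  · rw [card_image_of_injective _ (Equiv.injective _), h]

section CountingOrderings

variable {n : ℕ} {X : Type*} [Fintype X] [DecidableEq X]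

lemma card_filter_initSeg_eq_of_card_eq (k : ℕ) {S T : Finset X} (h : #S = #T) :
    #{σ : Fin n ≃ X | initSeg σ k = S} = #{σ : Fin n ≃ X | initSeg σ k = T} := by
  obtain ⟨g, hg⟩ := exists_perm_image_eq h
  refine card_equiv ((Equiv.refl _).equivCongr g) fun σ => ?_
  simp only [mem_filter, mem_univ, true_and, Equiv.equivCongr_refl_left, initSeg_trans, ← hg]
  exact (image_injective g.injective).eq_iff.symm

lemma card_filter_initSeg_mem {k : ℕ} (hk : k ≤ n) (𝒜 : Finset (Finset X)) {S₀ : Finset X}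
    (hS₀ : #S₀ = k) :
    #{σ : Fin n ≃ X | initSeg σ k ∈ 𝒜}
      = #{S ∈ 𝒜 | #S = k} * #{σ : Fin n ≃ X | initSeg σ k = S₀} := by
  rw [card_eq_sum_card_fiberwise (f := fun σ => initSeg σ k) (t := {S ∈ 𝒜 | #S = k})
    fun σ hσ => mem_filter.2 ⟨(mem_filter.1 hσ).2, card_initSeg σ hk⟩, ← smul_eq_mul, ← sum_const]
  refine sum_congr rfl fun S hS => ?_
  obtain ⟨hS𝒜, hSk⟩ := mem_filter.1 hS
  rw [filter_filter, ← card_filter_initSeg_eq_of_card_eq k (hSk.trans hS₀.symm)]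
  congr 1
  exact filter_congr fun σ _ => and_iff_right_of_imp fun hσ => by
    simpa only [hσ] using hS𝒜

lemma card_filter_initSeg_mem_mul_choose (hX : Fintype.card X = n) {k : ℕ} (hk : k ≤ n)
    (W : Finset (Finset X)) :
    #{σ : Fin n ≃ X | initSeg σ k ∈ W} * n.choose k = #{S ∈ W | #S = k} * n ! := by
  obtain ⟨S₀, -, hS₀⟩ := exists_subset_card_eq
    (show k ≤ #(univ : Finset X) by rwa [card_univ, hX])
  have hall := card_filter_initSeg_mem hk (powersetCard k univ) hS₀
  rw [filter_true_of_mem fun σ _ => mem_powersetCard_univ.2 (card_initSeg σ hk),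
    filter_true_of_mem fun S hS => mem_powersetCard_univ.1 hS, card_univ,
    Fintype.card_equiv (Fintype.equivFinOfCardEq hX).symm, Fintype.card_fin, card_powersetCard,
    card_univ, hX] at hall
  rw [card_filter_initSeg_mem hk W hS₀, hall]
  ring

end CountingOrderings

lemma sum_Qval_add_sum_card_filter_initSeg_mem {n : ℕ} {X : Type*} [Fintype X] [DecidableEq X]
    (hX : Fintype.card X = n) {W : Finset (Finset X)}
    (hmono : ∀ A B : Finset X, A ∈ W → A ⊆ B → B ∈ W) :
    ∑ σ : Fin n ≃ X, Qval W σ + ∑ k ∈ range (n + 1), #{σ : Fin n ≃ X | initSeg σ k ∈ W}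
      = n ! * (n + 1) := by
  have hQ : ∀ σ : Fin n ≃ X, Qval W σ + #{k ∈ range (n + 1) | initSeg σ k ∈ W} = n + 1 := by
    intro σ
    rw [Qval_eq_card_filter_notMem hmono, add_comm, card_filter_add_card_filter_not, card_range]
  have hswap : ∑ σ : Fin n ≃ X, #{k ∈ range (n + 1) | initSeg σ k ∈ W}
      = ∑ k ∈ range (n + 1), #{σ : Fin n ≃ X | initSeg σ k ∈ W} :=
    sum_card_bipartiteAbove_eq_sum_card_bipartiteBelow _
  rw [← hswap, ← sum_add_distrib, sum_congr rfl fun σ _ => hQ σ, sum_const, card_univ,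
    Fintype.card_equiv (Fintype.equivFinOfCardEq hX).symm, Fintype.card_fin, smul_eq_mul]

theorem statement19_general {X : Type*} [Fintype X] [DecidableEq X] (n : ℕ)
    (hn : Fintype.card X = n) (W : Finset (Finset X))
    (hmono : ∀ A B : Finset X, A ∈ W → A ⊆ B → B ∈ W) :
    (1 / ((n : ℝ) + 1)) * ∑ k ∈ Finset.range (n + 1),
        ((W.filter fun S => S.card = k).card : ℝ) / (n.choose k : ℝ)
      = 1 - ((∑ σ : Fin n ≃ X, (Qval W σ : ℝ)) / (n.factorial : ℝ)) / ((n : ℝ) + 1) := by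
  have hslice : ∀ k ∈ range (n + 1), (#{σ : Fin n ≃ X | initSeg σ k ∈ W} : ℝ) / n !
      = #{S ∈ W | #S = k} / n.choose k := by
    intro k hk
    have hkn : k ≤ n := Nat.lt_succ_iff.1 (mem_range.1 hk)
    rw [div_eq_div_iff (by positivity) (by exact_mod_cast (Nat.choose_pos hkn).ne')]
    exact_mod_cast card_filter_initSeg_mem_mul_choose hn hkn W
  have hcount : ∑ σ : Fin n ≃ X, (Qval W σ : ℝ)
      + ∑ k ∈ range (n + 1), (#{σ : Fin n ≃ X | initSeg σ k ∈ W} : ℝ) = n ! * (n + 1) := by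
    exact_mod_cast sum_Qval_add_sum_card_filter_initSeg_mem hn hmono
  rw [← sum_congr rfl hslice, ← sum_div]
  field_simp
  linarith

/-- For a monotone simple game `(X, W)` with `|X| = n`,
`Q*₀(G) = (1/(n+1)) ∑_{k=0}^{n} |W_k| / C(n,k) = 1 − Q̄(G)/(n+1)`, where `Q̄(G)` is the
average of `Q_σ(G)` over all `n!` bijections `σ : Fin n ≃ X`. -/
theorem statement19 {X : Type*} [Fintype X] [DecidableEq X] (n : ℕ)
    (hn : Fintype.card X = n) (W : Finset (Finset X)) (hW : ∅ ∉ W)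
    (hmono : ∀ A B : Finset X, A ∈ W → A ⊆ B → B ∈ W) :
    (1 / ((n : ℝ) + 1)) * ∑ k ∈ Finset.range (n + 1),
        ((W.filter fun S => S.card = k).card : ℝ) / (n.choose k : ℝ)
      = 1 - ((∑ σ : Fin n ≃ X, (Qval W σ : ℝ)) / (n.factorial : ℝ)) / ((n : ℝ) + 1) :=
  statement19_general n hn W hmono
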